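/- Let (Ω, ℱ, (ℱ_t), ℙ) be a filtered probability space and p ∈ (1,∞). Let w > 0 be a uniformly integrable martingale weight with A_p characteristic Q_p(w) = sup_τ ‖E[w|ℱ_τ] E[w^{-1/(p-1)}|ℱ_τ]^{p-1}‖_∞ < ∞. For an integrable random variable X with martingale X_t = E[X|ℱ_t], the pointwise bound |X_t|^{p-1} ≤ Q_p(w) · E[w|ℱ_t]^{-1} · (E_u[|X| u^{-1} | ℱ_t])^{p-1} holds a.s. for all t, where u = w^{-1/(p-1)} and E_u denotes u-weighted conditional expectation E_u[f|ℱ_t] = E[f u|ℱ_t]/E[u|ℱ_t]. -/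

import Mathlib

open MeasureTheory
open scoped NNReal

/-! Since `|X_t| ≤ E[|X| | ℱ_t] = (E[|X| | ℱ_t] / E[u | ℱ_t]) · E[u | ℱ_t]`, it suffices to bound
`E[u | ℱ_t]^(p-1)` by `Q / E[w | ℱ_t]`, which is the A_p condition at the constant stopping
time `t`; the divisions are harmless because conditional expectations of the strictly positive
weights `w` and `u` are a.s. strictly positive. -/

lemma condExp_pos_ae {Ω : Type*} {m m0 : MeasurableSpace Ω} {μ : Measure Ω} (hm : m ≤ m0)
    [SigmaFinite (μ.trim hm)] {f : Ω → ℝ} (hf : Integrable f μ) (hpos : ∀ᵐ ω ∂μ, 0 < f ω) :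
    ∀ᵐ ω ∂μ, 0 < (μ[f|m]) ω := by
  set s := {ω | (μ[f|m]) ω ≤ 0}
  have hs : MeasurableSet[m] s :=
    measurableSet_le stronglyMeasurable_condExp.measurable measurable_const
  have hint_nonpos : ∫ ω in s, f ω ∂μ ≤ 0 := by
    rw [← setIntegral_condExp hm hf hs]
    exact setIntegral_nonpos (hm _ hs) fun _ hω => hω
  have hf_zero : f =ᵐ[μ.restrict s] 0 :=
    (integral_eq_zero_iff_of_nonneg_ae (ae_restrict_of_ae (hpos.mono fun _ h => h.le))
      hf.integrableOn).1 (le_antisymm hint_nonpos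
        (setIntegral_nonneg_of_ae (hpos.mono fun _ h => h.le)))
  have hs_null : μ s = 0 := by
    rw [← Measure.restrict_eq_zero, ← ae_eq_bot, ← Filter.eventually_false_iff_eq_bot]
    filter_upwards [hf_zero, ae_restrict_of_ae hpos] with ω h0 hpos
    exact hpos.ne' h0
  exact measure_eq_zero_iff_ae_notMem.1 hs_null |>.mono fun _ h => not_le.1 h

lemma rpow_le_mul_inv_mul_div_rpow {r a e W U Q : ℝ} (hr : 0 ≤ r) (ha : 0 ≤ a) (hae : a ≤ e)
    (hW : 0 < W) (hU : 0 < U) (hQ : W * U ^ r ≤ Q) : a ^ r ≤ Q * W⁻¹ * (e / U) ^ r := by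
  have hUr : U ^ r ≤ Q * W⁻¹ := by
    rw [← div_eq_mul_inv, le_div_iff₀ hW, mul_comm]
    exact hQ
  have he : 0 ≤ e / U := div_nonneg (ha.trans hae) hU.le
  calc a ^ r ≤ e ^ r := Real.rpow_le_rpow ha hae hr
    _ = (e / U) ^ r * U ^ r := by rw [← Real.mul_rpow he hU.le, div_mul_cancel₀ _ hU.ne']
    _ ≤ (e / U) ^ r * (Q * W⁻¹) := by gcongr
    _ = Q * W⁻¹ * (e / U) ^ r := mul_comm _ _

theorem stmt12_general {Ω : Type*} {m0 : MeasurableSpace Ω} (μ : Measure Ω) [IsProbabilityMeasure μ]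
    (ℱ : Filtration ℝ≥0 m0) (p : ℝ) (hp : 1 < p)
    (w u : Ω → ℝ) (hwpos : ∀ ω, 0 < w ω)
    (hu : u = fun ω => w ω ^ (-(p - 1)⁻¹))
    (hwint : Integrable w μ) (huint : Integrable u μ)
    (Q : ℝ)
    (hQ : ∀ (τ : Ω → ℝ≥0) (hτ : IsStoppingTime ℱ (fun ω => (τ ω : WithTop ℝ≥0))),
      ∀ᵐ ω ∂μ, (μ[w|hτ.measurableSpace]) ω * ((μ[u|hτ.measurableSpace]) ω) ^ (p - 1) ≤ Q)
    (X : Ω → ℝ) :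
    ∀ t : ℝ≥0, ∀ᵐ ω ∂μ,
      |(μ[X|ℱ t]) ω| ^ (p - 1) ≤
        Q * ((μ[w|ℱ t]) ω)⁻¹ *
          ((μ[fun ω' => (|X ω'| * (u ω')⁻¹) * u ω'|ℱ t]) ω / (μ[u|ℱ t]) ω) ^ (p - 1) := by
  intro t
  have hupos : ∀ ω, 0 < u ω := fun ω => hu ▸ Real.rpow_pos_of_pos (hwpos ω) _
  have hunweighted : (fun ω => |X ω| * (u ω)⁻¹ * u ω) = fun ω => |X ω| :=
    funext fun ω => inv_mul_cancel_right₀ (hupos ω).ne' _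
  have hQt := hQ (fun _ => t) (isStoppingTime_const ℱ t)
  rw [IsStoppingTime.measurableSpace_const] at hQt
  rw [hunweighted]
  filter_upwards [condExp_pos_ae (ℱ.le t) hwint (.of_forall hwpos),
    condExp_pos_ae (ℱ.le t) huint (.of_forall hupos),
    abs_condExp_ae_le_condExp_abs (m := ℱ t) (μ := μ) X, hQt] with ω hW hU hX hQω
  exact rpow_le_mul_inv_mul_div_rpow (by linarith) (abs_nonneg _) hX hW hU hQω

theorem stmt12 {Ω : Type*} {m0 : MeasurableSpace Ω} (μ : Measure Ω) [IsProbabilityMeasure μ]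
    (ℱ : Filtration ℝ≥0 m0) (p : ℝ) (hp : 1 < p)
    (w u : Ω → ℝ) (hwpos : ∀ ω, 0 < w ω)
    (hwmart : Martingale (fun t => μ[w|ℱ t]) ℱ μ)
    (hwUI : UniformIntegrable (fun t => μ[w|ℱ t]) 1 μ)
    (hu : u = fun ω => w ω ^ (-(p - 1)⁻¹))
    (hwint : Integrable w μ) (huint : Integrable u μ)
    (Q : ℝ)
    (hQ : ∀ (τ : Ω → ℝ≥0) (hτ : IsStoppingTime ℱ (fun ω => (τ ω : WithTop ℝ≥0))),
      ∀ᵐ ω ∂μ, (μ[w|hτ.measurableSpace]) ω * ((μ[u|hτ.measurableSpace]) ω) ^ (p - 1) ≤ Q)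
    (X : Ω → ℝ) (hXint : Integrable X μ) :
    ∀ t : ℝ≥0, ∀ᵐ ω ∂μ,
      |(μ[X|ℱ t]) ω| ^ (p - 1) ≤
        Q * ((μ[w|ℱ t]) ω)⁻¹ *
          ((μ[fun ω' => (|X ω'| * (u ω')⁻¹) * u ω'|ℱ t]) ω / (μ[u|ℱ t]) ω) ^ (p - 1) :=
  stmt12_general μ ℱ p hp w u hwpos hu hwint huint Q hQ X
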